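/- Let A and M be SPD, x the solution of Ax = b, f(v) = ½vᵀAv − bᵀv, and suppose x_k, x_j satisfy f(x_k) ≤ f(x_j). Then with r_i = A(x − x_i), the ratio ‖r_k‖_{M⁻¹}/‖r_j‖_{M⁻¹} ≤ κ(A^{1/2}M⁻¹A^{1/2})^{1/2}. -/

import Mathlib

open scoped Matrix

open scoped Matrix.Norms.L2Operator

/-- The square root of a positive semidefinite matrix, as `Matrix.PosSemidef.sqrt` was defined
in the older Mathlib (removed since). -/
noncomputable def Matrix.PosSemidef.sqrt {n : Type*} [Fintype n] [DecidableEq n]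
    {A : Matrix n n ℝ} (hA : A.PosSemidef) : Matrix n n ℝ :=
  hA.1.eigenvectorUnitary.1 * Matrix.diagonal ((↑) ∘ (√·) ∘ hA.1.eigenvalues) *
    (star hA.1.eigenvectorUnitary : Matrix n n ℝ)

/-!
Write `S = A^{1/2}`, `T = (M⁻¹)^{1/2}` and `C = T S`. For an error `e = x - v`, the energy
`f v - f x` is `½ ‖S e‖²` and the preconditioned residual norm is `‖T A e‖ = ‖C (S e)‖`, while
`S M⁻¹ S = Cᵀ C` has `‖Cᵀ C‖ ‖(Cᵀ C)⁻¹‖ = (‖C‖ ‖C⁻¹‖)²`. So `f x_k ≤ f x_j` gives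
`‖C S e_k‖ ≤ ‖C‖ ‖S e_k‖ ≤ ‖C‖ ‖S e_j‖ ≤ ‖C‖ ‖C⁻¹‖ ‖C S e_j‖`.
-/

section SquareRoot

open scoped MatrixOrder

variable {n : Type*} [Fintype n] [DecidableEq n] {A : Matrix n n ℝ}

lemma Matrix.PosSemidef.sqrt_eq_cfc_sqrt (hA : A.PosSemidef) : hA.sqrt = CFC.sqrt A := by
  rw [CFC.sqrt_eq_real_sqrt A hA.nonneg, cfcₙ_eq_cfc, hA.1.cfc_eq]
  rfl

lemma Matrix.PosSemidef.sqrt_mul_self (hA : A.PosSemidef) : hA.sqrt * hA.sqrt = A := by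
  rw [hA.sqrt_eq_cfc_sqrt, CFC.sqrt_mul_sqrt_self A hA.nonneg]

lemma Matrix.PosSemidef.transpose_sqrt (hA : A.PosSemidef) : hA.sqrtᵀ = hA.sqrt := by
  rw [hA.sqrt_eq_cfc_sqrt]
  exact IsSelfAdjoint.of_nonneg (CFC.sqrt_nonneg A)

lemma Matrix.PosSemidef.transpose_sqrt_mul_sqrt (hA : A.PosSemidef) :
    hA.sqrtᵀ * hA.sqrt = A := by
  rw [hA.transpose_sqrt, hA.sqrt_mul_self]

lemma Matrix.PosDef.isUnit_sqrt (hA : A.PosDef) : IsUnit hA.posSemidef.sqrt := by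
  rw [Matrix.PosSemidef.sqrt_eq_cfc_sqrt, CFC.isUnit_sqrt_iff A hA.posSemidef.nonneg]
  exact hA.isUnit

end SquareRoot

section Norms

variable {m n : Type*} [Fintype m] [Fintype n]

lemma Matrix.dotProduct_transpose_mul_self_mulVec (X : Matrix m n ℝ) (v : n → ℝ) :
    v ⬝ᵥ (Xᵀ * X) *ᵥ v = ‖WithLp.toLp 2 (X *ᵥ v)‖ ^ 2 := by
  rw [EuclideanSpace.real_norm_sq_eq, ← Matrix.mulVec_mulVec, Matrix.dotProduct_mulVec,
    Matrix.vecMul_transpose]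
  simp [dotProduct, sq]

variable {𝕜 : Type*} [RCLike 𝕜] [DecidableEq n]

lemma Matrix.l2_norm_mulVec_le_of_norm_le {C : Matrix n n 𝕜} (hC : IsUnit C) {u w : n → 𝕜}
    (h : ‖WithLp.toLp 2 u‖ ≤ ‖WithLp.toLp 2 w‖) :
    ‖WithLp.toLp 2 (C *ᵥ u)‖ ≤ ‖C‖ * ‖C⁻¹‖ * ‖WithLp.toLp 2 (C *ᵥ w)‖ := by
  have hw : C⁻¹ *ᵥ (C *ᵥ w) = w := by
    rw [Matrix.mulVec_mulVec, Matrix.nonsing_inv_mul C ((Matrix.isUnit_iff_isUnit_det C).1 hC),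
      Matrix.one_mulVec]
  calc ‖WithLp.toLp 2 (C *ᵥ u)‖ ≤ ‖C‖ * ‖WithLp.toLp 2 u‖ := C.l2_opNorm_mulVec (.toLp 2 u)
    _ ≤ ‖C‖ * ‖WithLp.toLp 2 w‖ := by gcongr
    _ ≤ ‖C‖ * (‖C⁻¹‖ * ‖WithLp.toLp 2 (C *ᵥ w)‖) := by
      gcongr
      calc ‖WithLp.toLp 2 w‖ = ‖WithLp.toLp 2 (C⁻¹ *ᵥ (C *ᵥ w))‖ := by rw [hw]
        _ ≤ ‖C⁻¹‖ * ‖WithLp.toLp 2 (C *ᵥ w)‖ := C⁻¹.l2_opNorm_mulVec (.toLp 2 (C *ᵥ w))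
    _ = ‖C‖ * ‖C⁻¹‖ * ‖WithLp.toLp 2 (C *ᵥ w)‖ := by ring

lemma Matrix.l2_opNorm_conjTranspose_mul_self_mul_inv (C : Matrix n n 𝕜) :
    ‖Cᴴ * C‖ * ‖(Cᴴ * C)⁻¹‖ = (‖C‖ * ‖C⁻¹‖) ^ 2 := by
  have hinv : (Cᴴ * C)⁻¹ = (C⁻¹ᴴ)ᴴ * C⁻¹ᴴ := by
    rw [Matrix.mul_inv_rev, Matrix.conjTranspose_conjTranspose, Matrix.conjTranspose_nonsing_inv]
  rw [hinv, Matrix.l2_opNorm_conjTranspose_mul_self, Matrix.l2_opNorm_conjTranspose_mul_self,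
    Matrix.l2_opNorm_conjTranspose]
  ring

end Norms

lemma quadratic_sub_quadratic_of_mulVec_eq {n : Type*} [Fintype n] {A : Matrix n n ℝ}
    (hA : Aᵀ = A) {b x : n → ℝ} (hx : A *ᵥ x = b) (v : n → ℝ) :
    ((1 / 2) * (v ⬝ᵥ A *ᵥ v) - b ⬝ᵥ v) - ((1 / 2) * (x ⬝ᵥ A *ᵥ x) - b ⬝ᵥ x) =
      (1 / 2) * ((x - v) ⬝ᵥ A *ᵥ (x - v)) := by
  have hb : ∀ w, b ⬝ᵥ w = x ⬝ᵥ A *ᵥ w := fun w => by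
    rw [← hx, ← Matrix.vecMul_transpose, hA, Matrix.dotProduct_mulVec]
  have hsymm : v ⬝ᵥ A *ᵥ x = x ⬝ᵥ A *ᵥ v := by rw [hx, dotProduct_comm, hb]
  simp only [Matrix.mulVec_sub, sub_dotProduct, dotProduct_sub, hb, hsymm]
  ring

lemma norm_mulVec_mulVec_le_of_dotProduct_le {n : Type*} [Fintype n] [DecidableEq n]
    {A S T : Matrix n n ℝ} (hSA : Sᵀ * S = A) (hS : Sᵀ = S) (hTS : IsUnit (T * S))
    {e e' : n → ℝ} (h : e ⬝ᵥ A *ᵥ e ≤ e' ⬝ᵥ A *ᵥ e') :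
    ‖WithLp.toLp 2 (T *ᵥ A *ᵥ e)‖ ≤
      ‖T * S‖ * ‖(T * S)⁻¹‖ * ‖WithLp.toLp 2 (T *ᵥ A *ᵥ e')‖ := by
  have hfactor : ∀ v, T *ᵥ A *ᵥ v = (T * S) *ᵥ S *ᵥ v := fun v => by
    rw [← hSA, hS, Matrix.mulVec_mulVec, Matrix.mulVec_mulVec, Matrix.mul_assoc]
  have hS_norm : ‖WithLp.toLp 2 (S *ᵥ e)‖ ≤ ‖WithLp.toLp 2 (S *ᵥ e')‖ := by
    rw [← pow_le_pow_iff_left₀ (norm_nonneg _) (norm_nonneg _) two_ne_zero,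
      ← Matrix.dotProduct_transpose_mul_self_mulVec,
      ← Matrix.dotProduct_transpose_mul_self_mulVec, hSA]
    exact h
  rw [hfactor, hfactor]
  exact Matrix.l2_norm_mulVec_le_of_norm_le hTS hS_norm

/-- If `A`, `M` are SPD, `Ax = b`, `f(v) = ½vᵀAv − bᵀv` and `f(x_k) ≤ f(x_j)`, then
with `r_i = A(x − x_i)` we have `‖r_k‖_{M⁻¹}/‖r_j‖_{M⁻¹} ≤ κ(A^{1/2}M⁻¹A^{1/2})^{1/2}`,
where `κ(X) = ‖X‖‖X⁻¹‖` is the spectral condition number. -/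
theorem stmt10 {n : ℕ} (A M : Matrix (Fin n) (Fin n) ℝ) (hA : A.PosDef) (hM : M.PosDef)
    (b x xk xj : Fin n → ℝ) (hx : A.mulVec x = b)
    (f : (Fin n → ℝ) → ℝ)
    (hf : ∀ v, f v = (1 / 2) * (v ⬝ᵥ A.mulVec v) - b ⬝ᵥ v)
    (hle : f xk ≤ f xj) :
    Real.sqrt (A.mulVec (x - xk) ⬝ᵥ M⁻¹.mulVec (A.mulVec (x - xk))) /
        Real.sqrt (A.mulVec (x - xj) ⬝ᵥ M⁻¹.mulVec (A.mulVec (x - xj)))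
      ≤ Real.sqrt (‖hA.posSemidef.sqrt * M⁻¹ * hA.posSemidef.sqrt‖ *
          ‖(hA.posSemidef.sqrt * M⁻¹ * hA.posSemidef.sqrt)⁻¹‖) := by
  have hAt : Aᵀ = A := hA.isHermitian
  have henergy : (x - xk) ⬝ᵥ A *ᵥ (x - xk) ≤ (x - xj) ⬝ᵥ A *ᵥ (x - xj) := by
    have hk := quadratic_sub_quadratic_of_mulVec_eq hAt hx xk
    have hj := quadratic_sub_quadratic_of_mulVec_eq hAt hx xj
    rw [hf, hf] at hle
    linarith
  have hSA := hA.posSemidef.transpose_sqrt_mul_sqrt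
  have hSt := hA.posSemidef.transpose_sqrt
  have hT := hM.inv.posSemidef.transpose_sqrt_mul_sqrt
  have hTS := hM.inv.isUnit_sqrt.mul hA.isUnit_sqrt
  set S := hA.posSemidef.sqrt
  set T := hM.inv.posSemidef.sqrt
  have hB : S * M⁻¹ * S = (T * S)ᴴ * (T * S) := by
    rw [Matrix.conjTranspose_eq_transpose_of_trivial, Matrix.transpose_mul, hSt, ← hT]
    simp only [Matrix.mul_assoc]
  rw [hB, Matrix.l2_opNorm_conjTranspose_mul_self_mul_inv, Real.sqrt_sq (by positivity), ← hT,
    Matrix.dotProduct_transpose_mul_self_mulVec, Matrix.dotProduct_transpose_mul_self_mulVec,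
    Real.sqrt_sq (norm_nonneg _), Real.sqrt_sq (norm_nonneg _)]
  exact div_le_of_le_mul₀ (norm_nonneg _) (by positivity)
    (norm_mulVec_mulVec_le_of_dotProduct_le hSA hSt hTS henergy)
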